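/- arXiv:2001.00046 — 4 statements merged into one kernel-verified Lean document; each statement's English description precedes it below -/
import Mathlib

section
/- Let M = c • W with c ∈ ℂ, c ≠ 0 and W ∈ Matrix.unitaryGroup (Fin n) ℂ, and let Q be an m×m×n tensor that is ⋆_M-unitary. Then for every m×k×n tensor B one has ‖Q ⋆_M B‖_F = ‖B‖_F, and for every p×m×n tensor B' one has ‖B' ⋆_M Q‖_F = ‖B'‖_F. -/
open scoped BigOperators ComplexConjugate Matrix

noncomputable section

variable {R : Type*}

/-- Mode-3 product of a third-order tensor (encoded by its frontal slices)
with a transform matrix: `(A ×₃ M) i = ∑ j, (M i j) • (A j)`. -/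
def mode3 [RCLike R] {ι α β : Type*} [Fintype ι]
    (A : ι → Matrix α β R) (M : Matrix ι ι R) : ι → Matrix α β R :=
  fun i => ∑ j, M i j • A j

/-- Frobenius (entrywise ℓ²) norm of a matrix. -/
def fnorm [RCLike R] {α β : Type*} [Fintype α] [Fintype β] (A : Matrix α β R) : ℝ :=
  Real.sqrt (∑ a, ∑ b, ‖A a b‖ ^ 2)

/-- Frobenius norm of a tensor: `‖A‖² = ∑ i, ‖A i‖²`. -/
def tnorm [RCLike R] {ι α β : Type*} [Fintype ι] [Fintype α] [Fintype β]
    (A : ι → Matrix α β R) : ℝ :=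
  Real.sqrt (∑ i, fnorm (A i) ^ 2)

/-- The ⋆_M product: facewise product in the transform domain, then inverse transform. -/
def tprodM [RCLike R] {ι m p q : Type*} [Fintype ι] [DecidableEq ι] [Fintype p]
    (M : Matrix ι ι R) (A : ι → Matrix m p R) (B : ι → Matrix p q R) :
    ι → Matrix m q R :=
  mode3 (fun i => mode3 A M i * mode3 B M i) M⁻¹

/-- Conjugate transpose of a tensor under ⋆_M. -/
def tconj [RCLike R] {ι m p : Type*} [Fintype ι] [DecidableEq ι]
    (M : Matrix ι ι R) (A : ι → Matrix m p R) : ι → Matrix p m R :=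
  mode3 (fun i => (mode3 A M i)ᴴ) M⁻¹

/-- The identity tensor under ⋆_M. -/
def tId [RCLike R] (m : Type*) [DecidableEq m] {ι : Type*} [Fintype ι] [DecidableEq ι]
    (M : Matrix ι ι R) : ι → Matrix m m R :=
  mode3 (fun _ => (1 : Matrix m m R)) M⁻¹

/-- A square tensor `Q` is ⋆_M-unitary if `Qᴴ ⋆_M Q = Q ⋆_M Qᴴ = I`. -/
def tUnitary [RCLike R] {ι m : Type*} [Fintype ι] [DecidableEq ι] [Fintype m] [DecidableEq m]
    (M : Matrix ι ι R) (Q : ι → Matrix m m R) : Prop :=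
  tprodM M (tconj M Q) Q = tId m M ∧ tprodM M Q (tconj M Q) = tId m M

/-- A t-SVDM of `A`: a factorization `A = U ⋆_M S ⋆_M Vᴴ` with `U`, `V` ⋆_M-unitary and every
transform-domain slice `Ŝ i` diagonal with real, nonnegative, nonincreasing diagonal entries. -/
def IsTSVDM [RCLike R] {m p n : ℕ} (M : Matrix (Fin n) (Fin n) R)
    (A : Fin n → Matrix (Fin m) (Fin p) R)
    (U : Fin n → Matrix (Fin m) (Fin m) R)
    (S : Fin n → Matrix (Fin m) (Fin p) R)
    (V : Fin n → Matrix (Fin p) (Fin p) R) : Prop :=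
  A = tprodM M (tprodM M U S) (tconj M V) ∧
  tUnitary M U ∧ tUnitary M V ∧
  (∀ (i : Fin n) (a : Fin m) (b : Fin p), (a : ℕ) ≠ (b : ℕ) → mode3 S M i a b = 0) ∧
  (∀ (i : Fin n) (a : Fin m) (b : Fin p), (a : ℕ) = (b : ℕ) →
      ∃ r : ℝ, 0 ≤ r ∧ mode3 S M i a b = (r : R)) ∧
  (∀ (i : Fin n) (a a' : Fin m) (b b' : Fin p), (a : ℕ) = (b : ℕ) → (a' : ℕ) = (b' : ℕ) →
      (a : ℕ) ≤ (a' : ℕ) →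
      RCLike.re (mode3 S M i a' b') ≤ RCLike.re (mode3 S M i a b))

/-- Transform-domain slice of a truncation:
(first k columns of Û) * (leading k×k block of Ŝ) * (first k columns of V̂)ᴴ. -/
def truncSlice [RCLike R] {m p : ℕ} (k : ℕ) (Uh : Matrix (Fin m) (Fin m) R)
    (Sh : Matrix (Fin m) (Fin p) R) (Vh : Matrix (Fin p) (Fin p) R) :
    Matrix (Fin m) (Fin p) R :=
  Matrix.of fun a b =>
    ∑ j : Fin m, ∑ l : Fin p,
      if (j : ℕ) < k ∧ (l : ℕ) < k then Uh a j * Sh j l * star (Vh b l) else 0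

/-- The multi-rank-ρ truncation of a t-SVDM (use `ρ = fun _ => k` for the t-rank-k truncation). -/
def truncTensor [RCLike R] {m p n : ℕ} (M : Matrix (Fin n) (Fin n) R)
    (U : Fin n → Matrix (Fin m) (Fin m) R) (S : Fin n → Matrix (Fin m) (Fin p) R)
    (V : Fin n → Matrix (Fin p) (Fin p) R) (ρ : Fin n → ℕ) :
    Fin n → Matrix (Fin m) (Fin p) R :=
  mode3 (fun i => truncSlice (ρ i) (mode3 U M i) (mode3 S M i) (mode3 V M i)) M⁻¹

/-- The permuted tensor `Aᴾ`: `(Aᴾ c) i j = (A i) c j`. -/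
def tperm [RCLike R] {m p n : ℕ} (A : Fin n → Matrix (Fin m) (Fin p) R) :
    Fin m → Matrix (Fin n) (Fin p) R :=
  fun c => Matrix.of fun i j => A i c j

/-!
In the transform domain `Â i = (A ×₃ M) i`, the product `⋆_M` is facewise, so a `⋆_M`-unitary
tensor has unitary transform-domain slices `Q̂ i`, and multiplying a matrix by a unitary one
preserves its Frobenius norm. For `M = c • W` the transform is a scaled isometry,
`‖Â‖_F = |c| ‖A‖_F`, so equality of norms transfers back from the transform domain.
-/

open Matrix

section

variable [RCLike R] {ι α β : Type*}

lemma sum_norm_sq_eq_re_star_dotProduct [Fintype ι] (v : ι → R) :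
    ∑ i, ‖v i‖ ^ 2 = RCLike.re (star v ⬝ᵥ v) := by
  simp only [dotProduct, map_sum, Pi.star_apply, RCLike.star_def, RCLike.conj_mul]
  norm_cast

lemma sum_norm_sq_mulVec [Fintype ι] [DecidableEq ι] {M : Matrix ι ι R} {r : ℝ}
    (hM : Mᴴ * M = (r : R) • 1) (v : ι → R) :
    ∑ i, ‖(M *ᵥ v) i‖ ^ 2 = r * ∑ i, ‖v i‖ ^ 2 := by
  rw [sum_norm_sq_eq_re_star_dotProduct, sum_norm_sq_eq_re_star_dotProduct, star_mulVec,
    ← dotProduct_mulVec, mulVec_mulVec, hM, smul_mulVec, one_mulVec, dotProduct_smul,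
    smul_eq_mul, RCLike.re_ofReal_mul]

lemma sq_fnorm [Fintype α] [Fintype β] (A : Matrix α β R) :
    fnorm A ^ 2 = ∑ a, ∑ b, ‖A a b‖ ^ 2 :=
  Real.sq_sqrt (by positivity)

lemma sq_tnorm [Fintype ι] [Fintype α] [Fintype β] (A : ι → Matrix α β R) :
    tnorm A ^ 2 = ∑ i, ∑ a, ∑ b, ‖A i a b‖ ^ 2 := by
  simp only [tnorm, ← sq_fnorm]
  exact Real.sq_sqrt (by positivity)

lemma fnorm_conjTranspose [Fintype α] [Fintype β] (A : Matrix α β R) :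
    fnorm Aᴴ = fnorm A := by
  simp only [fnorm, conjTranspose_apply, norm_star]
  rw [Finset.sum_comm]

lemma fnorm_mul_of_conjTranspose_mul_self [Fintype α] [Fintype β] [DecidableEq α]
    {U : Matrix α α R} (hU : Uᴴ * U = 1) (X : Matrix α β R) : fnorm (U * X) = fnorm X := by
  have hU' : Uᴴ * U = ((1 : ℝ) : R) • 1 := by rw [hU, RCLike.ofReal_one, one_smul]
  have hcol (b : β) : ∑ a, ‖(U * X) a b‖ ^ 2 = ∑ a, ‖X a b‖ ^ 2 := by
    simpa [mul_apply, mulVec, dotProduct] using sum_norm_sq_mulVec hU' (fun a => X a b)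
  simp only [fnorm]
  rw [Finset.sum_comm, Finset.sum_congr rfl fun b _ => hcol b, Finset.sum_comm]

lemma fnorm_mul_of_mul_conjTranspose_self [Fintype α] [Fintype β] [DecidableEq α]
    {U : Matrix α α R} (hU : U * Uᴴ = 1) (X : Matrix β α R) : fnorm (X * U) = fnorm X := by
  rw [← fnorm_conjTranspose, conjTranspose_mul,
    fnorm_mul_of_conjTranspose_mul_self (by rwa [conjTranspose_conjTranspose]),
    fnorm_conjTranspose]

lemma sq_tnorm_mode3 [Fintype ι] [DecidableEq ι] [Fintype α] [Fintype β] {M : Matrix ι ι R}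
    {r : ℝ} (hM : Mᴴ * M = (r : R) • 1) (A : ι → Matrix α β R) :
    tnorm (mode3 A M) ^ 2 = r * tnorm A ^ 2 := by
  have hfiber (a : α) (b : β) :
      ∑ i, ‖mode3 A M i a b‖ ^ 2 = r * ∑ i, ‖A i a b‖ ^ 2 := by
    simpa [mode3, Matrix.sum_apply, mulVec, dotProduct] using
      sum_norm_sq_mulVec hM (fun j => A j a b)
  have hswap (T : ι → Matrix α β R) :
      ∑ i, ∑ a, ∑ b, ‖T i a b‖ ^ 2 = ∑ a, ∑ b, ∑ i, ‖T i a b‖ ^ 2 :=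
    Finset.sum_comm.trans (Finset.sum_congr rfl fun _ _ => Finset.sum_comm)
  simp only [sq_tnorm, hswap, hfiber, Finset.mul_sum]

lemma tnorm_eq_of_tnorm_mode3_eq [Fintype ι] [DecidableEq ι] [Fintype α] [Fintype β]
    {M : Matrix ι ι R} {r : ℝ} (hM : Mᴴ * M = (r : R) • 1) (hr : r ≠ 0)
    {A B : ι → Matrix α β R} (h : tnorm (mode3 A M) = tnorm (mode3 B M)) :
    tnorm A = tnorm B := by
  have hsq : r * tnorm A ^ 2 = r * tnorm B ^ 2 := by
    rw [← sq_tnorm_mode3 hM, ← sq_tnorm_mode3 hM, h]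
  exact (sq_eq_sq₀ (Real.sqrt_nonneg _) (Real.sqrt_nonneg _)).1 (mul_left_cancel₀ hr hsq)

lemma isUnit_det_of_conjTranspose_mul_self_eq_smul [Fintype ι] [DecidableEq ι]
    {M : Matrix ι ι R} {r : ℝ} (hM : Mᴴ * M = (r : R) • 1) (hr : r ≠ 0) : IsUnit M.det :=
  isUnit_det_of_left_inverse (B := (r : R)⁻¹ • Mᴴ) (by
    rw [smul_mul, hM, smul_smul, inv_mul_cancel₀ (RCLike.ofReal_ne_zero.2 hr), one_smul])

end

section TransformDomain

variable [RCLike R] {ι α β γ : Type*} [Fintype ι] [DecidableEq ι] {M : Matrix ι ι R}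

lemma mode3_mode3_of_mul_eq_one {N : Matrix ι ι R} (h : N * M = 1) (A : ι → Matrix α β R) :
    mode3 (mode3 A M) N = A := by
  funext i
  simp only [mode3, Finset.smul_sum, smul_smul]
  rw [Finset.sum_comm]
  simp only [← Finset.sum_smul, ← mul_apply, h, one_apply, ite_smul, one_smul, zero_smul,
    Finset.sum_ite_eq, Finset.mem_univ, if_true]

variable (hM : IsUnit M.det)
include hM

lemma mode3_mode3_inv (A : ι → Matrix α β R) : mode3 (mode3 A M⁻¹) M = A :=
  mode3_mode3_of_mul_eq_one (mul_nonsing_inv M hM) A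

lemma mode3_tprodM [Fintype β] (A : ι → Matrix α β R) (B : ι → Matrix β γ R) :
    mode3 (tprodM M A B) M = fun i => mode3 A M i * mode3 B M i :=
  mode3_mode3_inv hM _

lemma mode3_tconj (A : ι → Matrix α β R) : mode3 (tconj M A) M = fun i => (mode3 A M i)ᴴ :=
  mode3_mode3_inv hM _

lemma mode3_tId [DecidableEq α] : mode3 (tId α M) M = fun _ => 1 :=
  mode3_mode3_inv hM _

variable [Fintype α] [DecidableEq α] {Q : ι → Matrix α α R}

lemma tUnitary.conjTranspose_mul_self (hQ : tUnitary M Q) (i : ι) :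
    (mode3 Q M i)ᴴ * mode3 Q M i = 1 := by
  simpa [mode3_tprodM hM, mode3_tconj hM, mode3_tId hM] using
    congrFun (congrArg (mode3 · M) hQ.1) i

lemma tUnitary.mul_conjTranspose_self (hQ : tUnitary M Q) (i : ι) :
    mode3 Q M i * (mode3 Q M i)ᴴ = 1 := by
  simpa [mode3_tprodM hM, mode3_tconj hM, mode3_tId hM] using
    congrFun (congrArg (mode3 · M) hQ.2) i

end TransformDomain

section

variable [RCLike R] {ι α β : Type*} [Fintype ι] [DecidableEq ι] [Fintype α] [DecidableEq α]
  [Fintype β] {M : Matrix ι ι R} {r : ℝ} {Q : ι → Matrix α α R}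

lemma tnorm_tprodM_of_tUnitary_left (hM : Mᴴ * M = (r : R) • 1) (hr : r ≠ 0)
    (hQ : tUnitary M Q) (B : ι → Matrix α β R) : tnorm (tprodM M Q B) = tnorm B := by
  have hdet := isUnit_det_of_conjTranspose_mul_self_eq_smul hM hr
  refine tnorm_eq_of_tnorm_mode3_eq hM hr ?_
  simp only [mode3_tprodM hdet, tnorm,
    fnorm_mul_of_conjTranspose_mul_self (hQ.conjTranspose_mul_self hdet _)]

lemma tnorm_tprodM_of_tUnitary_right (hM : Mᴴ * M = (r : R) • 1) (hr : r ≠ 0)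
    (hQ : tUnitary M Q) (B : ι → Matrix β α R) : tnorm (tprodM M B Q) = tnorm B := by
  have hdet := isUnit_det_of_conjTranspose_mul_self_eq_smul hM hr
  refine tnorm_eq_of_tnorm_mode3_eq hM hr ?_
  simp only [mode3_tprodM hdet, tnorm,
    fnorm_mul_of_mul_conjTranspose_self (hQ.mul_conjTranspose_self hdet _)]

end

lemma conjTranspose_mul_self_smul_of_mem_unitaryGroup [RCLike R] {ι : Type*} [Fintype ι]
    [DecidableEq ι] {W : Matrix ι ι R} (hW : W ∈ unitaryGroup ι R) (c : R) :
    (c • W)ᴴ * (c • W) = ((‖c‖ ^ 2 : ℝ) : R) • 1 := by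
  rw [conjTranspose_smul, smul_mul_smul_comm, ← star_eq_conjTranspose,
    (mem_unitaryGroup_iff' (A := W)).1 hW, RCLike.star_def, RCLike.conj_mul, RCLike.ofReal_pow]

/-- unitary invariance of the tensor Frobenius norm under ⋆_M products
with a ⋆_M-unitary tensor, for `M = c • W`, `c ≠ 0`, `W` unitary. -/
theorem stmt1 {n m k p : ℕ}
    (W : Matrix (Fin n) (Fin n) ℂ) (hW : W ∈ Matrix.unitaryGroup (Fin n) ℂ)
    (c : ℂ) (hc : c ≠ 0)
    (Q : Fin n → Matrix (Fin m) (Fin m) ℂ) (hQ : tUnitary (c • W) Q) :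
    (∀ B : Fin n → Matrix (Fin m) (Fin k) ℂ,
        tnorm (tprodM (c • W) Q B) = tnorm B) ∧
    (∀ B' : Fin n → Matrix (Fin p) (Fin m) ℂ,
        tnorm (tprodM (c • W) B' Q) = tnorm B') := by
  have hM := conjTranspose_mul_self_smul_of_mem_unitaryGroup hW c
  have hr : ‖c‖ ^ 2 ≠ 0 := pow_ne_zero 2 (norm_ne_zero_iff.2 hc)
  exact ⟨tnorm_tprodM_of_tUnitary_left hM hr hQ, tnorm_tprodM_of_tUnitary_right hM hr hQ⟩
end
end

section
/- Let M : Matrix (Fin n) (Fin n) ℂ be invertible. An m×m×n tensor Q is ⋆_M-unitary if and only if for every i, the transform-domain frontal slice Q̂ i = (Q ×₃ M) i belongs to Matrix.unitaryGroup (Fin m) ℂ. -/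
open scoped BigOperators ComplexConjugate Matrix

noncomputable section

variable {R : Type*}

lemma mode3_mode3 [RCLike R] {ι α β : Type*} [Fintype ι] [DecidableEq ι]
    (X : ι → Matrix α β R) (M N : Matrix ι ι R) (h : M * N = 1) :
    mode3 (mode3 X N) M = X := by
  funext i
  simp only [mode3, Finset.smul_sum]
  rw [Finset.sum_comm]
  have : ∀ k : ι, ∑ j : ι, M i j • N j k • X k = (M * N) i k • X k := by
    intro k
    rw [Matrix.mul_apply, Finset.sum_smul]
    simp [smul_smul]
  simp only [this, h, Matrix.one_apply]
  simp [Finset.sum_ite_eq', ite_smul]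

/-- a square tensor is ⋆_M-unitary iff every transform-domain frontal slice
is a unitary matrix. -/
theorem stmt2 {n m : ℕ} (M : Matrix (Fin n) (Fin n) ℂ) (hM : IsUnit M.det)
    (Q : Fin n → Matrix (Fin m) (Fin m) ℂ) :
    tUnitary M Q ↔ ∀ i, mode3 Q M i ∈ Matrix.unitaryGroup (Fin m) ℂ := by
  have hMinv : M * M⁻¹ = 1 := Matrix.mul_nonsing_inv M hM
  have key : ∀ {α β : Type} (X Y : Fin n → Matrix α β ℂ),
      mode3 X M⁻¹ = mode3 Y M⁻¹ ↔ X = Y := by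
    intro α β X Y
    constructor
    · intro h
      have := congrArg (fun Z => mode3 Z M) h
      simpa [mode3_mode3 _ _ _ hMinv] using this
    · intro h; rw [h]
  have hconj : mode3 (tconj M Q) M = fun i => (mode3 Q M i)ᴴ := by
    simpa [tconj] using mode3_mode3 (fun i => (mode3 Q M i)ᴴ) M M⁻¹ hMinv
  simp only [tUnitary, tprodM, tId, hconj, key]
  constructor
  · rintro ⟨h1, h2⟩ i
    constructor
    · exact congrFun h1 i
    · exact congrFun h2 i
  · intro h
    constructor
    · funext i; exact (h i).1
    · funext i; exact (h i).2
end
end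

section
/- (Latent structure theorem.) Let M : Matrix (Fin n) (Fin n) ℂ be invertible, let U be an m×t×n tensor and C a t×p×n tensor, and suppose A = U ⋆_M C. Then for every column index k (with k < p), the squeeze of the k-th lateral slice of A satisfies squeeze(A_{:,k,:}) = ∑_{i=1}^{t} squeeze(U_{:,i,:}) * R[c_{i,k}], where c_{i,k} : Fin n → ℂ is the tube fiber (c_{i,k}) j := (C j) i k. -/
open scoped BigOperators ComplexConjugate Matrix

noncomputable section

variable {R : Type*}

private lemma sum_rot {α : Type*} [Fintype α] (f : α → α → α → ℂ) :
    ∑ x, ∑ y, ∑ z, f x y z = ∑ z, ∑ x, ∑ y, f x y z := by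
  rw [show (∑ x, ∑ y, ∑ z, f x y z) = ∑ x, ∑ z, ∑ y, f x y z from
    Finset.sum_congr rfl fun x _ => Finset.sum_comm, Finset.sum_comm]

/-- latent structure: if `A = U ⋆_M C` then each squeezed lateral slice of `A`
is a sum of squeezed lateral slices of `U` multiplied by matrices
`R[v] = Mᵀ * diagonal (M.mulVec v) * (Mᵀ)⁻¹` built from the tube fibers of `C`. -/
theorem stmt7 {n m t p : ℕ} (M : Matrix (Fin n) (Fin n) ℂ) (hM : IsUnit M.det)
    (U : Fin n → Matrix (Fin m) (Fin t) ℂ)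
    (C : Fin n → Matrix (Fin t) (Fin p) ℂ)
    (A : Fin n → Matrix (Fin m) (Fin p) ℂ)
    (hA : A = tprodM M U C) (k : Fin p) :
    (Matrix.of fun (a : Fin m) (i : Fin n) => A i a k) =
      ∑ i : Fin t,
        (Matrix.of fun (a : Fin m) (j : Fin n) => U j a i) *
          (Mᵀ * Matrix.diagonal (M.mulVec fun j => C j i k) * (Mᵀ)⁻¹) := by
  subst hA
  ext a j
  rw [← Matrix.transpose_nonsing_inv]
  simp only [tprodM, mode3, Matrix.of_apply, Matrix.sum_apply, Matrix.smul_apply,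
    Matrix.mul_apply, Matrix.diagonal_apply, Matrix.transpose_apply, Matrix.mulVec,
    dotProduct, smul_eq_mul, Finset.mul_sum, Finset.sum_mul,
    Finset.sum_ite_eq', Finset.mem_univ, if_true, mul_ite, ite_mul, zero_mul, mul_zero]
  rw [Finset.sum_comm]
  refine Finset.sum_congr rfl fun l _ => ?_
  rw [sum_rot]
  refine Finset.sum_congr rfl fun x _ => Finset.sum_congr rfl fun y _ =>
    Finset.sum_congr rfl fun z _ => by ring
end
end

section
/- (The t-rank is at most the matrix rank.) Given matrices D_1,…,D_ℓ ∈ Matrix (Fin m) (Fin n) ℂ, form the matrix 𝐀 : Matrix (Fin m × Fin n) (Fin ℓ) ℂ with 𝐀 (a,i) j = (D j) a i, and the m×ℓ×n tensor A with (A i) a j = (D j) a i. Then for every invertible M : Matrix (Fin n) (Fin n) ℂ and every i, the matrix rank of the transform-domain frontal slice (A ×₃ M) i is at most min(m, rank 𝐀). -/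
open scoped BigOperators ComplexConjugate Matrix

noncomputable section

variable {R : Type*}

/-- t-rank is at most the matrix rank: each transform-domain frontal slice of the
data tensor has rank at most `min m (rank 𝐀)`, where `𝐀` is the unfolded data matrix. -/
theorem stmt8 {m n ℓ : ℕ} (D : Fin ℓ → Matrix (Fin m) (Fin n) ℂ)
    (M : Matrix (Fin n) (Fin n) ℂ) (hM : IsUnit M.det) (i : Fin n) :
    Matrix.rank (mode3 (fun i => Matrix.of fun a j => D j a i) M i) ≤
      min m (Matrix.rank
        (Matrix.of fun (ai : Fin m × Fin n) (j : Fin ℓ) => D j ai.1 ai.2)) := by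
  set AA : Matrix (Fin m × Fin n) (Fin ℓ) ℂ :=
    Matrix.of fun (ai : Fin m × Fin n) (j : Fin ℓ) => D j ai.1 ai.2
  set P : Matrix (Fin m) (Fin m × Fin n) ℂ :=
    Matrix.of fun a ak => if ak.1 = a then M i ak.2 else 0
  have key : mode3 (fun i => Matrix.of fun a j => D j a i) M i = P * AA := by
    ext a j
    simp only [mode3, Matrix.mul_apply, P, AA, Matrix.of_apply, Matrix.sum_apply,
      Matrix.smul_apply, smul_eq_mul]
    rw [Fintype.sum_prod_type]
    rw [Finset.sum_eq_single a]
    · simp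
    · intro b _ hb
      simp [hb]
    · simp
  rw [key]
  refine le_min ?_ ?_
  · exact le_trans (Matrix.rank_le_card_height _) (by simp)
  · exact Matrix.rank_mul_le_right P AA
end
end
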